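/- arXiv:2510.09246 — 3 statements merged into one kernel-verified Lean document; each statement's English description precedes it below -/
import Mathlib

section
/- Let w₁ ≠ 0. Then for l_pred = (t_pred, l')ᵀ ∈ ℒ the following are equivalent: (i) there exists p₀ ∈ 𝒫 with d(l_pred, p₀) = d(ℒ, 𝒫) = min_{l∈ℒ, p∈𝒫} d(l,p); (ii) t_pred = −(1/‖w₁‖²)·w₁ᵀ W' l'. Moreover, in that case d(l_pred, p₀) = d(ℒ, 𝒫) holds exactly for p₀ = proj_𝒫(l_pred). -/
open Matrix

/-- Distance between two subsets of a metric space: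
`d(𝒜,ℬ) = inf {dist a b | a ∈ 𝒜, b ∈ ℬ}`. -/
noncomputable def setDist {X : Type*} [MetricSpace X] (A B : Set X) : ℝ :=
  sInf (Set.image2 dist A B)

/-!
For `p ∈ 𝒫`, Pythagoras gives `d(l, p)² = ‖l - Π l‖² + ‖Π l - p‖²`, where `Π = P(PᵀP)⁻¹Pᵀ` is the
orthogonal projection onto `𝒫`, so `l - Π l = -W l`. On `ℒ` we have `W (t, l')ᵀ = t w₁ + W' l'`, and
completing the square gives `‖t w₁ + W' l'‖² = c² + ‖w₁‖² (t - t*)²` with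
`t* = -⟪w₁, W' l'⟫ / ‖w₁‖²` and `c = ‖t* w₁ + W' l'‖`. Hence `d(ℒ, 𝒫) = c`, and `d(l, p) = c`
forces both `t = t*` and `p = Π l`.
-/

open scoped InnerProductSpace

theorem setDist_eq_of_forall_le {X : Type*} [MetricSpace X] {A B : Set X} {a b : X}
    (ha : a ∈ A) (hb : b ∈ B) (h : ∀ x ∈ A, ∀ y ∈ B, dist a b ≤ dist x y) :
    setDist A B = dist a b :=
  IsLeast.csInf_eq ⟨Set.mem_image2_of_mem ha hb, Set.forall_mem_image2.2 h⟩

section InnerProductSpace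

variable {E : Type*} [NormedAddCommGroup E] [InnerProductSpace ℝ E]

theorem Submodule.dist_sq_eq_norm_sub_starProjection_sq_add (K : Submodule ℝ E)
    [K.HasOrthogonalProjection] (x : E) {p : E} (hp : p ∈ K) :
    dist x p ^ 2 = ‖x - K.starProjection x‖ ^ 2 + ‖K.starProjection x - p‖ ^ 2 := by
  have horth : ⟪x - K.starProjection x, K.starProjection x - p⟫_ℝ = 0 :=
    (K.mem_orthogonal' _).1 (K.sub_starProjection_mem_orthogonal x) _
      (K.sub_mem (K.starProjection_apply_mem x) hp)
  rw [dist_eq_norm, ← sub_add_sub_cancel x (K.starProjection x) p, sq, sq, sq,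
    norm_add_sq_eq_norm_sq_add_norm_sq_real horth]

theorem norm_smul_add_sq_eq {w : E} (hw : w ≠ 0) (v : E) (t : ℝ) :
    ‖t • w + v‖ ^ 2 = ‖(-(1 / ‖w‖ ^ 2) * ⟪w, v⟫_ℝ) • w + v‖ ^ 2
      + ‖w‖ ^ 2 * (t - -(1 / ‖w‖ ^ 2) * ⟪w, v⟫_ℝ) ^ 2 := by
  have hw2 : ‖w‖ ^ 2 ≠ 0 := by positivity
  have expand (s : ℝ) : ‖s • w + v‖ ^ 2 = s ^ 2 * ‖w‖ ^ 2 + 2 * s * ⟪w, v⟫_ℝ + ‖v‖ ^ 2 := by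
    rw [norm_add_sq_real, real_inner_smul_left, norm_smul, mul_pow, Real.norm_eq_abs, sq_abs]
    ring
  rw [expand, expand]
  field_simp
  ring

theorem dist_eq_setDist_range_iff (K : Submodule ℝ E) [K.HasOrthogonalProjection]
    {g : ℝ → E} {w v : E} (hw : w ≠ 0)
    (hg : ∀ t, ‖g t - K.starProjection (g t)‖ = ‖t • w + v‖) {t : ℝ} {p : E} (hp : p ∈ K) :
    dist (g t) p = setDist (Set.range g) K ↔
      t = -(1 / ‖w‖ ^ 2) * ⟪w, v⟫_ℝ ∧ p = K.starProjection (g t) := by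
  set t₀ := -(1 / ‖w‖ ^ 2) * ⟪w, v⟫_ℝ
  set c := ‖t₀ • w + v‖
  have hdist_sq (s : ℝ) {q : E} (hq : q ∈ K) :
      dist (g s) q ^ 2 = c ^ 2 + ‖w‖ ^ 2 * (s - t₀) ^ 2 + ‖K.starProjection (g s) - q‖ ^ 2 := by
    rw [K.dist_sq_eq_norm_sub_starProjection_sq_add _ hq, hg, norm_smul_add_sq_eq hw]
  have hmin : dist (g t₀) (K.starProjection (g t₀)) = c := by
    have := hdist_sq t₀ (K.starProjection_apply_mem (g t₀))
    rw [sub_self, sub_self, norm_zero] at this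
    rw [← sq_eq_sq₀ dist_nonneg (norm_nonneg _), this]
    ring
  have hset : setDist (Set.range g) K = c := by
    rw [← hmin]
    refine setDist_eq_of_forall_le ⟨t₀, rfl⟩ (K.starProjection_apply_mem _) ?_
    rintro _ ⟨s, rfl⟩ q hq
    rw [hmin, ← sq_le_sq₀ (norm_nonneg _) dist_nonneg, hdist_sq s hq]
    nlinarith [sq_nonneg (s - t₀), sq_nonneg ‖w‖, sq_nonneg ‖K.starProjection (g s) - q‖]
  rw [hset, ← sq_eq_sq₀ dist_nonneg (norm_nonneg _), hdist_sq t hp, add_assoc, add_eq_left,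
    add_eq_zero_iff_of_nonneg (by positivity) (by positivity), mul_eq_zero, sq_eq_zero_iff,
    sq_eq_zero_iff, sq_eq_zero_iff, norm_eq_zero, norm_eq_zero, sub_eq_zero, sub_eq_zero,
    eq_comm (a := K.starProjection _)]
  simp only [hw, false_or]

end InnerProductSpace

section ColumnSpan

variable {m n : Type*}

theorem Matrix.gram_toLp_transpose [Fintype m] (P : Matrix m n ℝ) :
    gram ℝ (fun j => WithLp.toLp 2 (Pᵀ j) : n → EuclideanSpace ℝ m) = Pᵀ * P := by
  ext i j
  simp [EuclideanSpace.inner_toLp_toLp, dotProduct, mul_apply, mul_comm]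

theorem Matrix.transpose_mul_self_mul_inv [Fintype m] [Fintype n] [DecidableEq n]
    {P : Matrix m n ℝ}
    (hP : LinearIndependent ℝ (fun j => WithLp.toLp 2 (Pᵀ j) : n → EuclideanSpace ℝ m)) :
    Pᵀ * P * (Pᵀ * P)⁻¹ = 1 := by
  refine mul_nonsing_inv _ (isUnit_iff_ne_zero.2 ?_)
  rw [← gram_toLp_transpose]
  exact det_gram_ne_zero_iff_linearIndependent.2 hP

theorem Matrix.toLp_mulVec_mem_span [Fintype n] (P : Matrix m n ℝ) (y : n → ℝ) :
    WithLp.toLp 2 (P *ᵥ y) ∈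
      Submodule.span ℝ (Set.range fun j => (WithLp.toLp 2 (Pᵀ j) : EuclideanSpace ℝ m)) := by
  have : WithLp.toLp 2 (P *ᵥ y) = ∑ j, y j • (WithLp.toLp 2 (Pᵀ j) : EuclideanSpace ℝ m) := by
    ext i
    simp [mulVec, dotProduct, mul_comm]
  rw [this]
  exact Submodule.sum_mem _ fun j _ => Submodule.smul_mem _ _ (Submodule.subset_span ⟨j, rfl⟩)

theorem Matrix.starProjection_span_cols [Fintype m] [Fintype n] [DecidableEq n]
    {P : Matrix m n ℝ}
    (hP : LinearIndependent ℝ (fun j => WithLp.toLp 2 (Pᵀ j) : n → EuclideanSpace ℝ m))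
    (x : EuclideanSpace ℝ m) :
    (Submodule.span ℝ
        (Set.range fun j => (WithLp.toLp 2 (Pᵀ j) : EuclideanSpace ℝ m))).starProjection x =
      WithLp.toLp 2 ((P * (Pᵀ * P)⁻¹ * Pᵀ) *ᵥ x) := by
  refine Submodule.eq_starProjection_of_mem_orthogonal ?_ ?_
  · rw [Matrix.mul_assoc, ← mulVec_mulVec]
    exact toLp_mulVec_mem_span P _
  · have hPt : Pᵀ * (P * (Pᵀ * P)⁻¹ * Pᵀ) = Pᵀ := by
      rw [← Matrix.mul_assoc, ← Matrix.mul_assoc, transpose_mul_self_mul_inv hP, Matrix.one_mul]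
    refine (Submodule.isOrtho_span.2 ?_) (Submodule.mem_span_singleton_self _)
    rintro _ rfl _ ⟨j, rfl⟩
    have : Pᵀ *ᵥ (x - (P * (Pᵀ * P)⁻¹ * Pᵀ) *ᵥ x) = 0 := by
      rw [mulVec_sub, mulVec_mulVec, hPt, sub_self]
    rw [EuclideanSpace.inner_eq_star_dotProduct, star_trivial]
    exact congrFun this j

end ColumnSpan

theorem Matrix.mulVec_finCons {m : Type*} {k : ℕ} {α : Type*} [NonUnitalCommSemiring α]
    (M : Matrix m (Fin (k + 1)) α) (t : α) (l : Fin k → α) :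
    M *ᵥ Fin.cons t l =
      t • (fun i => M i 0) + (fun i j => M i j.succ : Matrix m (Fin k) α) *ᵥ l := by
  ext i
  simp [mulVec, dotProduct, Fin.sum_univ_succ, mul_comm]

theorem stmt_1_general {r n : ℕ}
    (P : Matrix (Fin (r + 1)) (Fin n) ℝ)
    (hP : LinearIndependent ℝ (fun j : Fin n => (WithLp.toLp 2 (Pᵀ j) : EuclideanSpace ℝ (Fin (r + 1)))))
    (Psub : Submodule ℝ (EuclideanSpace ℝ (Fin (r + 1))))
    (hPsub : Psub = Submodule.span ℝ
      (Set.range fun j : Fin n => (WithLp.toLp 2 (Pᵀ j) : EuclideanSpace ℝ (Fin (r + 1)))))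
    (W : Matrix (Fin (r + 1)) (Fin (r + 1)) ℝ)
    (hW : W = P * (Pᵀ * P)⁻¹ * Pᵀ - 1)
    (w₁ : EuclideanSpace ℝ (Fin (r + 1))) (hw₁ : w₁ = fun i => W i 0)
    (W' : Matrix (Fin (r + 1)) (Fin r) ℝ) (hW' : W' = fun i j => W i j.succ)
    (l' : Fin r → ℝ)
    (L : Set (EuclideanSpace ℝ (Fin (r + 1))))
    (hL : L = {x : EuclideanSpace ℝ (Fin (r + 1)) | ∃ t : ℝ, x = WithLp.toLp 2 (Fin.cons t l')})
    (hw : w₁ ≠ 0) :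
    ∀ (tpred : ℝ) (lpred : EuclideanSpace ℝ (Fin (r + 1))), lpred = WithLp.toLp 2 (Fin.cons tpred l') →
      ((∃ p₀ ∈ Psub, dist lpred p₀ = setDist L ↑Psub) ↔
        tpred = -(1 / ‖w₁‖ ^ 2) * (w₁ ⬝ᵥ W'.mulVec l')) ∧
      (tpred = -(1 / ‖w₁‖ ^ 2) * (w₁ ⬝ᵥ W'.mulVec l') →
        ∀ p₀ ∈ Psub, (dist lpred p₀ = setDist L ↑Psub ↔
          p₀ = (Psub.orthogonalProjectionOnto lpred : EuclideanSpace ℝ (Fin (r + 1))))) := by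
  intro tpred lpred hlpred
  set line : ℝ → EuclideanSpace ℝ (Fin (r + 1)) := fun t => WithLp.toLp 2 (Fin.cons t l')
  have hL_range : L = Set.range line := by
    rw [hL]
    ext
    simp [line, eq_comm]
  have hresidual (t : ℝ) :
      ‖line t - Psub.starProjection (line t)‖ = ‖t • w₁ + WithLp.toLp 2 (W' *ᵥ l')‖ := by
    rw [← norm_neg, neg_sub, hPsub, starProjection_span_cols hP, ← WithLp.toLp_ofLp (x := w₁), hw₁, hW',
      ← WithLp.toLp_smul, ← WithLp.toLp_add, ← mulVec_finCons, ← WithLp.toLp_sub, hW, sub_mulVec,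
      one_mulVec]
  have hinner : ⟪w₁, WithLp.toLp 2 (W' *ᵥ l')⟫_ℝ = w₁ ⬝ᵥ W' *ᵥ l' := by
    rw [EuclideanSpace.inner_eq_star_dotProduct, star_trivial, dotProduct_comm]
  have key (p : EuclideanSpace ℝ (Fin (r + 1))) (hp : p ∈ Psub) :=
    dist_eq_setDist_range_iff Psub hw hresidual (t := tpred) hp
  simp only [hinner] at key
  subst hlpred hL_range
  simp only [← Submodule.starProjection_apply]
  refine ⟨⟨fun ⟨p, hp, h⟩ => ((key p hp).1 h).1, fun ht => ?_⟩, fun ht p hp => ?_⟩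
  · exact ⟨_, Psub.starProjection_apply_mem _, (key _ (Psub.starProjection_apply_mem _)).2 ⟨ht, rfl⟩⟩
  · rw [key p hp]
    exact and_iff_right ht

/-- Proposition 1, case 2 (`w₁ ≠ 0`): for `l_pred = (t_pred, l')ᵀ ∈ ℒ`, there exists `p₀ ∈ 𝒫`
with `d(l_pred, p₀) = d(ℒ,𝒫)` (the minimum of `d(l,p)` over `l ∈ ℒ`, `p ∈ 𝒫`) if and only if
`t_pred = -(1/‖w₁‖²)·w₁ᵀW'l'`; moreover in that case `d(l_pred,p₀) = d(ℒ,𝒫)` holds exactly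
for `p₀ = proj_𝒫(l_pred)`. -/
theorem stmt_1 {r n : ℕ} (hr : 1 ≤ r)
    (P : Matrix (Fin (r + 1)) (Fin n) ℝ)
    (hP : LinearIndependent ℝ (fun j : Fin n => (WithLp.toLp 2 (Pᵀ j) : EuclideanSpace ℝ (Fin (r + 1)))))
    (Psub : Submodule ℝ (EuclideanSpace ℝ (Fin (r + 1))))
    (hPsub : Psub = Submodule.span ℝ
      (Set.range fun j : Fin n => (WithLp.toLp 2 (Pᵀ j) : EuclideanSpace ℝ (Fin (r + 1)))))
    (W : Matrix (Fin (r + 1)) (Fin (r + 1)) ℝ)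
    (hW : W = P * (Pᵀ * P)⁻¹ * Pᵀ - 1)
    (w₁ : EuclideanSpace ℝ (Fin (r + 1))) (hw₁ : w₁ = fun i => W i 0)
    (W' : Matrix (Fin (r + 1)) (Fin r) ℝ) (hW' : W' = fun i j => W i j.succ)
    (l' : Fin r → ℝ)
    (L : Set (EuclideanSpace ℝ (Fin (r + 1))))
    (hL : L = {x : EuclideanSpace ℝ (Fin (r + 1)) | ∃ t : ℝ, x = WithLp.toLp 2 (Fin.cons t l')})
    (hw : w₁ ≠ 0) :
    ∀ (tpred : ℝ) (lpred : EuclideanSpace ℝ (Fin (r + 1))), lpred = WithLp.toLp 2 (Fin.cons tpred l') →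
      ((∃ p₀ ∈ Psub, dist lpred p₀ = setDist L ↑Psub) ↔
        tpred = -(1 / ‖w₁‖ ^ 2) * (w₁ ⬝ᵥ W'.mulVec l')) ∧
      (tpred = -(1 / ‖w₁‖ ^ 2) * (w₁ ⬝ᵥ W'.mulVec l') →
        ∀ p₀ ∈ Psub, (dist lpred p₀ = setDist L ↑Psub ↔
          p₀ = (Psub.orthogonalProjectionOnto lpred : EuclideanSpace ℝ (Fin (r + 1))))) :=
  stmt_1_general P hP Psub hPsub W hW w₁ hw₁ W' hW' l' L hL hw
end

section
/- Let P be an arbitrary m×n real matrix of rank r and let P_e be an m×r matrix whose columns are linearly independent and span the same subspace 𝒫 as the columns of P (for example, the nonzero columns of a column echelon form of P). Set W = P_e(P_eᵀP_e)⁻¹P_eᵀ − E_m = [w₁|W']. Then: (1) if w₁ = 0, then for every l ∈ ℒ, d(l,𝒫) = d(ℒ,𝒫) and this distance is attained by some p ∈ 𝒫; (2) if w₁ ≠ 0, then for l_pred = (t_pred, l')ᵀ ∈ ℒ there exists p₀ ∈ 𝒫 with d(l_pred, p₀) = d(ℒ,𝒫) if and only if t_pred = −(1/‖w₁‖²)·w₁ᵀ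 W' l'. -/
open Matrix

/-!
The matrix `Pe (Peᵀ Pe)⁻¹ Peᵀ` is the orthogonal projection onto `𝒫`, so `W x = -π x` with `π` the
orthogonal projection onto `𝒫ᗮ`. Writing the points of `ℒ` as `t • e₀ + x₀`, the distance from such
a point to `𝒫` is therefore `‖t • w₁ + W' l'‖`: constant in `t` when `w₁ = 0`, and otherwise a
quadratic in `t` whose unique minimum is at `t = -⟪w₁, W' l'⟫ / ‖w₁‖²`. Since the distance from a
point to a subspace is attained at its projection, a point of `ℒ` attains `d(ℒ, 𝒫)` exactly when it
minimizes this function.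
-/

open Metric Set RealInnerProductSpace Submodule WithLp

section setDist

variable {X : Type*} [MetricSpace X] {A B : Set X} {a : X}

theorem setDist_le_infDist (ha : a ∈ A) (hB : B.Nonempty) : setDist A B ≤ infDist a B := by
  rw [infDist_eq_iInf]
  have : Nonempty B := hB.to_subtype
  refine le_ciInf fun b => csInf_le ⟨0, ?_⟩ (mem_image2_of_mem ha b.2)
  rintro _ ⟨_, _, _, _, rfl⟩
  exact dist_nonneg

theorem infDist_eq_setDist_iff (ha : a ∈ A) (hB : B.Nonempty) :
    infDist a B = setDist A B ↔ ∀ a' ∈ A, infDist a B ≤ infDist a' B := by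
  refine ⟨fun h a' ha' => h ▸ setDist_le_infDist ha' hB, fun h => ?_⟩
  refine le_antisymm ?_ (setDist_le_infDist ha hB)
  obtain ⟨b, hb⟩ := hB
  refine le_csInf ⟨_, mem_image2_of_mem ha hb⟩ ?_
  rintro _ ⟨a', ha', b', hb', rfl⟩
  exact (h a' ha').trans (infDist_le_dist_of_mem hb')

end setDist

section line

variable {E : Type*} [NormedAddCommGroup E] [InnerProductSpace ℝ E]

theorem norm_smul_add_sq (w v : E) (t : ℝ) :
    ‖t • w + v‖ ^ 2 = t ^ 2 * ‖w‖ ^ 2 + 2 * t * ⟪w, v⟫ + ‖v‖ ^ 2 := by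
  rw [norm_add_sq_real, real_inner_smul_left, norm_smul, mul_pow, Real.norm_eq_abs, sq_abs]
  ring

theorem norm_smul_add_sq_eq_of_mul_eq {w : E} (v : E) {t₀ : ℝ} (ht₀ : ‖w‖ ^ 2 * t₀ = -⟪w, v⟫)
    (t : ℝ) : ‖t • w + v‖ ^ 2 = ‖w‖ ^ 2 * (t - t₀) ^ 2 + ‖t₀ • w + v‖ ^ 2 := by
  rw [norm_smul_add_sq, norm_smul_add_sq]
  linear_combination 2 * (t - t₀) * ht₀

theorem norm_smul_add_le_iff {w : E} (hw : w ≠ 0) (v : E) (t : ℝ) :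
    (∀ s : ℝ, ‖t • w + v‖ ≤ ‖s • w + v‖) ↔ t = -(1 / ‖w‖ ^ 2) * ⟪w, v⟫ := by
  have hw' : 0 < ‖w‖ ^ 2 := by positivity
  set t₀ := -(1 / ‖w‖ ^ 2) * ⟪w, v⟫
  have key := norm_smul_add_sq_eq_of_mul_eq (w := w) v (t₀ := t₀) (by simp only [t₀]; field_simp)
  simp only [← sq_le_sq₀ (norm_nonneg _) (norm_nonneg _)]
  constructor
  · intro h
    have hsq : (t - t₀) ^ 2 = 0 := by nlinarith [h t₀, key t, sq_nonneg (t - t₀)]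
    linarith [pow_eq_zero_iff two_ne_zero |>.mp hsq]
  · intro ht s
    rw [ht, key s]
    nlinarith [sq_nonneg (s - t₀)]

namespace Submodule

variable (K : Submodule ℝ E) [K.HasOrthogonalProjection]

theorem infDist_eq_norm_starProjection_orthogonal (x : E) :
    infDist x K = ‖Kᗮ.starProjection x‖ := by
  rw [starProjection_orthogonal_val, starProjection_minimal, infDist_eq_iInf]
  simp only [dist_eq_norm]
  rfl

theorem exists_mem_dist_eq_iff {x : E} {d : ℝ} (hd : d ≤ infDist x K) :
    (∃ p ∈ K, dist x p = d) ↔ infDist x K = d := by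
  refine ⟨fun ⟨p, hp, hxp⟩ => le_antisymm (hxp ▸ infDist_le_dist_of_mem hp) hd, fun h => ?_⟩
  refine ⟨K.starProjection x, K.starProjection_apply_mem x, ?_⟩
  rw [← h, infDist_eq_norm_starProjection_orthogonal, starProjection_orthogonal_val, dist_eq_norm]

theorem infDist_smul_add (u x₀ : E) (t : ℝ) :
    infDist (t • u + x₀) K = ‖t • Kᗮ.starProjection u + Kᗮ.starProjection x₀‖ := by
  rw [infDist_eq_norm_starProjection_orthogonal, map_add, map_smul]

theorem infDist_eq_setDist_line_iff (u x₀ : E) (t : ℝ) :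
    infDist (t • u + x₀) K = setDist (range fun s : ℝ => s • u + x₀) K ↔
      ∀ s : ℝ, ‖t • Kᗮ.starProjection u + Kᗮ.starProjection x₀‖ ≤
        ‖s • Kᗮ.starProjection u + Kᗮ.starProjection x₀‖ := by
  rw [infDist_eq_setDist_iff (mem_range_self (f := fun s : ℝ => s • u + x₀) t) ⟨0, K.zero_mem⟩,
    forall_mem_range]
  simp only [infDist_smul_add]

theorem exists_mem_dist_eq_setDist_line_iff (u x₀ : E) (t : ℝ) :
    (∃ p ∈ K, dist (t • u + x₀) p = setDist (range fun s : ℝ => s • u + x₀) K) ↔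
      ∀ s : ℝ, ‖t • Kᗮ.starProjection u + Kᗮ.starProjection x₀‖ ≤
        ‖s • Kᗮ.starProjection u + Kᗮ.starProjection x₀‖ :=
  (K.exists_mem_dist_eq_iff
    (setDist_le_infDist (mem_range_self (f := fun s : ℝ => s • u + x₀) t) ⟨0, K.zero_mem⟩)).trans
    (K.infDist_eq_setDist_line_iff u x₀ t)

end Submodule

end line

namespace Matrix

variable {m k : Type*} [Fintype k] (A : Matrix m k ℝ)

theorem toLp_mulVec_eq_sum (c : k → ℝ) :
    toLp 2 (A *ᵥ c) = ∑ j, c j • (toLp 2 (Aᵀ j) : EuclideanSpace ℝ m) := by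
  ext i
  simp [mulVec, dotProduct, mul_comm]

theorem mem_span_toLp_col_iff {x : EuclideanSpace ℝ m} :
    x ∈ span ℝ (range fun j => (toLp 2 (Aᵀ j) : EuclideanSpace ℝ m)) ↔
      ∃ c, toLp 2 (A *ᵥ c) = x := by
  simp only [mem_span_range_iff_exists_fun, toLp_mulVec_eq_sum]

variable {A}

theorem isUnit_det_transpose_mul_self [Fintype m] [DecidableEq k]
    (hA : LinearIndependent ℝ fun j => (toLp 2 (Aᵀ j) : EuclideanSpace ℝ m)) :
    IsUnit (Aᵀ * A).det := by
  have hcol : LinearIndependent ℝ A.col :=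
    hA.map' (WithLp.linearEquiv 2 ℝ (m → ℝ)).toLinearMap (LinearEquiv.ker _)
  exact (isUnit_iff_isUnit_det _).mp
    (PosDef.conjTranspose_mul_self A (mulVec_injective_iff.mpr hcol)).isUnit

theorem starProjection_span_toLp_col [Fintype m] [DecidableEq k]
    (hA : LinearIndependent ℝ fun j => (toLp 2 (Aᵀ j) : EuclideanSpace ℝ m)) (x : m → ℝ) :
    (span ℝ (range fun j => (toLp 2 (Aᵀ j) : EuclideanSpace ℝ m))).starProjection (toLp 2 x) =
      toLp 2 ((A * (Aᵀ * A)⁻¹ * Aᵀ) *ᵥ x) := by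
  have hAQ : Aᵀ * (A * (Aᵀ * A)⁻¹ * Aᵀ) = Aᵀ := by
    rw [← Matrix.mul_assoc, ← Matrix.mul_assoc, mul_nonsing_inv _ (isUnit_det_transpose_mul_self hA),
      Matrix.one_mul]
  refine eq_starProjection_of_mem_of_inner_eq_zero
    ((mem_span_toLp_col_iff A).2 ⟨_, by rw [Matrix.mul_assoc, ← mulVec_mulVec]⟩) ?_
  intro y hy
  obtain ⟨c, rfl⟩ := (mem_span_toLp_col_iff A).1 hy
  rw [EuclideanSpace.inner_eq_star_dotProduct, star_trivial, dotProduct_comm, dotProduct_mulVec,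
    ← mulVec_transpose, ofLp_sub, mulVec_sub, mulVec_mulVec, hAQ, sub_self, zero_dotProduct]

end Matrix

theorem EuclideanSpace.toLp_cons_eq_smul_single_add {q : ℕ} (t : ℝ) (l' : Fin q → ℝ) :
    toLp 2 (Fin.cons t l' : Fin (q + 1) → ℝ) =
      t • EuclideanSpace.single 0 1 + toLp 2 (Fin.cons 0 l' : Fin (q + 1) → ℝ) := by
  ext i
  cases i using Fin.cases <;> simp

theorem stmt_3_general {q r : ℕ}
    (Pe : Matrix (Fin (q + 1)) (Fin r) ℝ)
    (hPe : LinearIndependent ℝ (fun j : Fin r => (WithLp.toLp 2 (Peᵀ j) : EuclideanSpace ℝ (Fin (q + 1)))))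
    (Psub : Submodule ℝ (EuclideanSpace ℝ (Fin (q + 1))))
    (hspan : Submodule.span ℝ
        (Set.range fun j : Fin r => (WithLp.toLp 2 (Peᵀ j) : EuclideanSpace ℝ (Fin (q + 1)))) = Psub)
    (W : Matrix (Fin (q + 1)) (Fin (q + 1)) ℝ)
    (hW : W = Pe * (Peᵀ * Pe)⁻¹ * Peᵀ - 1)
    (w₁ : EuclideanSpace ℝ (Fin (q + 1))) (hw₁ : w₁ = fun i => W i 0)
    (W' : Matrix (Fin (q + 1)) (Fin q) ℝ) (hW' : W' = fun i j => W i j.succ)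
    (l' : Fin q → ℝ)
    (L : Set (EuclideanSpace ℝ (Fin (q + 1))))
    (hL : L = {x : EuclideanSpace ℝ (Fin (q + 1)) | ∃ t : ℝ, x = WithLp.toLp 2 (Fin.cons t l' : Fin (q + 1) → ℝ)}) :
    (w₁ = 0 → ∀ l ∈ L,
      Metric.infDist l ↑Psub = setDist L ↑Psub ∧
      ∃ p ∈ Psub, dist l p = setDist L ↑Psub) ∧
    (w₁ ≠ 0 → ∀ (tpred : ℝ) (lpred : EuclideanSpace ℝ (Fin (q + 1))),
      lpred = WithLp.toLp 2 (Fin.cons tpred l' : Fin (q + 1) → ℝ) →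
      ((∃ p₀ ∈ Psub, dist lpred p₀ = setDist L ↑Psub) ↔
        tpred = -(1 / ‖w₁‖ ^ 2) * (w₁ ⬝ᵥ W'.mulVec l'))) := by
  set u : EuclideanSpace ℝ (Fin (q + 1)) := EuclideanSpace.single 0 1
  set x₀ : EuclideanSpace ℝ (Fin (q + 1)) := toLp 2 (Fin.cons 0 l')
  have hWproj (y : Fin (q + 1) → ℝ) : toLp 2 (W *ᵥ y) = -Psubᗮ.starProjection (toLp 2 y) := by
    rw [starProjection_orthogonal_val, ← hspan, starProjection_span_toLp_col hPe, hW, sub_mulVec,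
      one_mulVec, toLp_sub, neg_sub]
  have hw : w₁ = -Psubᗮ.starProjection u := by
    rw [← hWproj]
    ext i
    simp [hw₁, mulVec_single]
  have hv : toLp 2 (W' *ᵥ l') = -Psubᗮ.starProjection x₀ := by
    rw [← hWproj]
    ext i
    simp [hW', mulVec, dotProduct, Fin.sum_univ_succ]
  have hline (t : ℝ) : toLp 2 (Fin.cons t l') = t • u + x₀ :=
    EuclideanSpace.toLp_cons_eq_smul_single_add t l'
  obtain rfl : L = range fun t : ℝ => t • u + x₀ := by
    ext x
    simp only [hL, mem_ofPred_eq, mem_range]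
    exact exists_congr fun t => by rw [hline, eq_comm]
  refine ⟨fun hw₁0 l ⟨t, hl⟩ => ?_, fun hw₁0 tpred lpred hl => ?_⟩
  · have hmin (s : ℝ) : ‖t • Psubᗮ.starProjection u + Psubᗮ.starProjection x₀‖ ≤
        ‖s • Psubᗮ.starProjection u + Psubᗮ.starProjection x₀‖ := by
      simp [neg_eq_zero.mp (hw ▸ hw₁0)]
    subst hl
    exact ⟨(Psub.infDist_eq_setDist_line_iff u x₀ t).2 hmin,
      (Psub.exists_mem_dist_eq_setDist_line_iff u x₀ t).2 hmin⟩
  · have hdot : w₁ ⬝ᵥ W' *ᵥ l' = ⟪w₁, toLp 2 (W' *ᵥ l')⟫ := by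
      rw [real_inner_comm, EuclideanSpace.inner_eq_star_dotProduct]
      rfl
    rw [hl, hline, Psub.exists_mem_dist_eq_setDist_line_iff,
      norm_smul_add_le_iff (neg_ne_zero.mp (hw ▸ hw₁0)), hdot, hv, hw, inner_neg_neg, norm_neg]

/-- Proposition 2: `P` is an arbitrary `m × n` matrix of rank `r` and `P_e` is an `m × r`
matrix with linearly independent columns spanning the same subspace `𝒫` as the columns of `P`.
With `W = P_e(P_eᵀP_e)⁻¹P_eᵀ - E_m = [w₁|W']`:
(1) if `w₁ = 0` then for every `l ∈ ℒ`, `d(l,𝒫) = d(ℒ,𝒫)` and this distance is attained;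
(2) if `w₁ ≠ 0` then `l_pred = (t_pred,l')ᵀ ∈ ℒ` attains `d(ℒ,𝒫)` iff
`t_pred = -(1/‖w₁‖²)·w₁ᵀW'l'`. -/
theorem stmt_3 {q n r : ℕ} (hq : 1 ≤ q)
    (P : Matrix (Fin (q + 1)) (Fin n) ℝ) (hrank : P.rank = r)
    (Pe : Matrix (Fin (q + 1)) (Fin r) ℝ)
    (hPe : LinearIndependent ℝ (fun j : Fin r => (WithLp.toLp 2 (Peᵀ j) : EuclideanSpace ℝ (Fin (q + 1)))))
    (Psub : Submodule ℝ (EuclideanSpace ℝ (Fin (q + 1))))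
    (hPsub : Psub = Submodule.span ℝ
      (Set.range fun j : Fin n => (WithLp.toLp 2 (Pᵀ j) : EuclideanSpace ℝ (Fin (q + 1)))))
    (hspan : Submodule.span ℝ
        (Set.range fun j : Fin r => (WithLp.toLp 2 (Peᵀ j) : EuclideanSpace ℝ (Fin (q + 1)))) = Psub)
    (W : Matrix (Fin (q + 1)) (Fin (q + 1)) ℝ)
    (hW : W = Pe * (Peᵀ * Pe)⁻¹ * Peᵀ - 1)
    (w₁ : EuclideanSpace ℝ (Fin (q + 1))) (hw₁ : w₁ = fun i => W i 0)
    (W' : Matrix (Fin (q + 1)) (Fin q) ℝ) (hW' : W' = fun i j => W i j.succ)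
    (l' : Fin q → ℝ)
    (L : Set (EuclideanSpace ℝ (Fin (q + 1))))
    (hL : L = {x : EuclideanSpace ℝ (Fin (q + 1)) | ∃ t : ℝ, x = WithLp.toLp 2 (Fin.cons t l' : Fin (q + 1) → ℝ)}) :
    (w₁ = 0 → ∀ l ∈ L,
      Metric.infDist l ↑Psub = setDist L ↑Psub ∧
      ∃ p ∈ Psub, dist l p = setDist L ↑Psub) ∧
    (w₁ ≠ 0 → ∀ (tpred : ℝ) (lpred : EuclideanSpace ℝ (Fin (q + 1))),
      lpred = WithLp.toLp 2 (Fin.cons tpred l' : Fin (q + 1) → ℝ) →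
      ((∃ p₀ ∈ Psub, dist lpred p₀ = setDist L ↑Psub) ↔
        tpred = -(1 / ‖w₁‖ ^ 2) * (w₁ ⬝ᵥ W'.mulVec l'))) :=
  stmt_3_general Pe hPe Psub hspan W hW w₁ hw₁ W' hW' l' L hL
end

section
/- Assume w₁ ≠ 0. Let t₁, t₂, t₃ be three distinct real numbers, let l_i = (t_i, l')ᵀ ∈ ℒ, and let d_i = ‖proj_𝒫(l_i) − l_i‖² for i = 1,2,3. Let (a₀, a₁, a₂) be the solution of the linear system with Vandermonde matrix rows (1, t_i, t_i²) and right-hand side (d₁, d₂, d₃). Then a₂ = ‖w₁‖² > 0, and for l_pred = (t_pred, l')ᵀ ∈ ℒ there exists p₀ ∈ 𝒫 with d(l_pred, p₀) = d(ℒ,𝒫) if and only if t_pred = −a₁/(2a₂). -/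
/-!
The residual `R x = proj_𝒫 x - x` is linear, and `P (PᵀP)⁻¹ Pᵀ` is the matrix of `proj_𝒫`, so
`R e₁ = w₁` and along the line `l_t = l₀ + t e₁` the residual is `R l₀ + t w₁`. Hence
`t ↦ ‖proj_𝒫(l_t) - l_t‖²` is the quadratic `‖R l₀‖² + 2⟪w₁, R l₀⟫ t + ‖w₁‖² t²`, which the three
interpolation conditions pin down coefficientwise. Since `‖proj_𝒫 x - x‖` is the distance from `x`
to `𝒫`, `d(ℒ, 𝒫)` is the square root of the minimum of this strictly convex quadratic, attained
exactly at its vertex.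
-/

open Matrix

open Submodule Set

section ColumnSpan

variable {m n : Type*} [Fintype n]

theorem isUnit_transpose_mul_self_of_linearIndependent [Fintype m] [DecidableEq n]
    {P : Matrix m n ℝ}
    (hP : LinearIndependent ℝ fun j => (WithLp.toLp 2 (Pᵀ j) : EuclideanSpace ℝ m)) :
    IsUnit (Pᵀ * P) := by
  have hcol : LinearIndependent ℝ P.col := hP.map' (WithLp.linearEquiv 2 ℝ (m → ℝ)).toLinearMap
    (WithLp.linearEquiv 2 ℝ (m → ℝ)).ker
  simpa only [conjTranspose_eq_transpose_of_trivial] using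
    (PosDef.conjTranspose_mul_self P (mulVec_injective_iff.mpr hcol)).isUnit

theorem toLp_mulVec_mem_span_cols (P : Matrix m n ℝ) (y : n → ℝ) :
    (WithLp.toLp 2 (P *ᵥ y) : EuclideanSpace ℝ m) ∈
      span ℝ (range fun j => (WithLp.toLp 2 (Pᵀ j) : EuclideanSpace ℝ m)) := by
  have hy : P *ᵥ y ∈ span ℝ (range P.col) := range_mulVecLin P ▸ LinearMap.mem_range_self _ y
  have := mem_map_of_mem (f := (WithLp.linearEquiv 2 ℝ (m → ℝ)).symm.toLinearMap) hy
  rwa [map_span, ← range_comp] at this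

theorem starProjection_span_cols_eq [Fintype m] [DecidableEq n] {P : Matrix m n ℝ}
    (hG : IsUnit (Pᵀ * P)) (x : EuclideanSpace ℝ m) :
    (span ℝ (range fun j => (WithLp.toLp 2 (Pᵀ j) : EuclideanSpace ℝ m))).starProjection x =
      WithLp.toLp 2 ((P * (Pᵀ * P)⁻¹ * Pᵀ) *ᵥ x.ofLp) := by
  refine eq_starProjection_of_mem_of_inner_eq_zero ?_ fun w hw => ?_
  · rw [Matrix.mul_assoc, ← mulVec_mulVec]
    exact toLp_mulVec_mem_span_cols P _
  · have hPt : Pᵀ * (P * (Pᵀ * P)⁻¹ * Pᵀ) = Pᵀ := by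
      rw [← Matrix.mul_assoc, ← Matrix.mul_assoc,
        mul_nonsing_inv _ ((isUnit_iff_isUnit_det _).mp hG), Matrix.one_mul]
    refine (span_le (p := LinearMap.ker (innerₛₗ ℝ _)) |>.mpr ?_ hw)
    rintro _ ⟨j, rfl⟩
    change inner ℝ (x - _) (WithLp.toLp 2 (Pᵀ j)) = 0
    rw [EuclideanSpace.inner_eq_star_dotProduct]
    have hres : Pᵀ *ᵥ (x.ofLp - (P * (Pᵀ * P)⁻¹ * Pᵀ) *ᵥ x.ofLp) = 0 := by
      rw [mulVec_sub, mulVec_mulVec, hPt, sub_self]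
    rw [star_trivial, WithLp.ofLp_sub, WithLp.ofLp_toLp]
    exact congrFun hres j

end ColumnSpan

theorem quadratic_coeffs_eq_of_eq_at_three {a₀ a₁ a₂ b₀ b₁ b₂ t₁ t₂ t₃ : ℝ}
    (h12 : t₁ ≠ t₂) (h13 : t₁ ≠ t₃) (h23 : t₂ ≠ t₃)
    (e₁ : a₀ + a₁ * t₁ + a₂ * t₁ ^ 2 = b₀ + b₁ * t₁ + b₂ * t₁ ^ 2)
    (e₂ : a₀ + a₁ * t₂ + a₂ * t₂ ^ 2 = b₀ + b₁ * t₂ + b₂ * t₂ ^ 2)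
    (e₃ : a₀ + a₁ * t₃ + a₂ * t₃ ^ 2 = b₀ + b₁ * t₃ + b₂ * t₃ ^ 2) :
    a₀ = b₀ ∧ a₁ = b₁ ∧ a₂ = b₂ := by
  have s12 : (a₂ - b₂) * (t₁ + t₂) + (a₁ - b₁) = 0 :=
    mul_left_cancel₀ (sub_ne_zero.2 h12) (by linear_combination e₁ - e₂)
  have s13 : (a₂ - b₂) * (t₁ + t₃) + (a₁ - b₁) = 0 :=
    mul_left_cancel₀ (sub_ne_zero.2 h13) (by linear_combination e₁ - e₃)
  have h₂ : a₂ = b₂ :=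
    sub_eq_zero.1 <| mul_left_cancel₀ (sub_ne_zero.2 h23) (by linear_combination s12 - s13)
  have h₁ : a₁ = b₁ := by linear_combination s12 - (t₁ + t₂) * h₂
  exact ⟨by linear_combination e₁ - t₁ * h₁ - t₁ ^ 2 * h₂, h₁, h₂⟩

theorem quadratic_sub_eval_vertex {a : ℝ} (ha : a ≠ 0) (b c t : ℝ) :
    c + b * t + a * t ^ 2 - (c + b * (-b / (2 * a)) + a * (-b / (2 * a)) ^ 2) =
      a * (t - -b / (2 * a)) ^ 2 := by
  field_simp
  ring

theorem norm_sq_map_add_smul {E F : Type*} [AddCommGroup E] [Module ℝ E] [NormedAddCommGroup F]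
    [InnerProductSpace ℝ F] (T : E →ₗ[ℝ] F) (x v : E) (t : ℝ) :
    ‖T (x + t • v)‖ ^ 2 = ‖T x‖ ^ 2 + 2 * inner ℝ (T v) (T x) * t + ‖T v‖ ^ 2 * t ^ 2 := by
  rw [map_add, map_smul, add_comm, norm_add_sq_real, norm_smul, real_inner_smul_left, mul_pow,
    Real.norm_eq_abs, sq_abs]
  ring

section DistToSubspace

variable {E : Type*} [NormedAddCommGroup E] [InnerProductSpace ℝ E] (K : Submodule ℝ E)
  [K.HasOrthogonalProjection]

theorem norm_starProjection_sub_le_dist {x p : E} (hp : p ∈ K) :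
    ‖K.starProjection x - x‖ ≤ dist x p := by
  rw [norm_sub_rev, starProjection_minimal, dist_eq_norm]
  exact ciInf_le ⟨0, by rintro _ ⟨q, rfl⟩; exact norm_nonneg _⟩ (⟨p, hp⟩ : K)

theorem setDist_eq_norm_starProjection_sub {L : Set E} {y : E} (hy : y ∈ L)
    (hmin : ∀ x ∈ L, ‖K.starProjection y - y‖ ≤ ‖K.starProjection x - x‖) :
    setDist L K = ‖K.starProjection y - y‖ := by
  refine IsLeast.csInf_eq ⟨⟨y, hy, _, K.starProjection_apply_mem y, ?_⟩, ?_⟩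
  · rw [dist_eq_norm, norm_sub_rev]
  · rintro _ ⟨x, hx, p, hp, rfl⟩
    exact (hmin x hx).trans (norm_starProjection_sub_le_dist K hp)

theorem exists_mem_dist_eq_iff {x : E} {c : ℝ} (hc : c ≤ ‖K.starProjection x - x‖) :
    (∃ p ∈ K, dist x p = c) ↔ ‖K.starProjection x - x‖ = c := by
  refine ⟨fun ⟨p, hp, hxp⟩ => le_antisymm (hxp ▸ norm_starProjection_sub_le_dist K hp) hc,
    fun h => ⟨_, K.starProjection_apply_mem x, ?_⟩⟩
  rw [dist_eq_norm, norm_sub_rev, h]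

theorem exists_mem_dist_eq_setDist_range_iff {γ : ℝ → E} {a b c : ℝ} (ha : 0 < a)
    (hγ : ∀ t, ‖K.starProjection (γ t) - γ t‖ ^ 2 = c + b * t + a * t ^ 2) (t : ℝ) :
    (∃ p ∈ K, dist (γ t) p = setDist (range γ) K) ↔ t = -b / (2 * a) := by
  set s := -b / (2 * a)
  have hgap : ∀ t, ‖K.starProjection (γ t) - γ t‖ ^ 2 - ‖K.starProjection (γ s) - γ s‖ ^ 2 =
      a * (t - s) ^ 2 := fun t => by rw [hγ, hγ]; exact quadratic_sub_eval_vertex ha.ne' b c t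
  have hmin : ∀ t, ‖K.starProjection (γ s) - γ s‖ ≤ ‖K.starProjection (γ t) - γ t‖ := fun t =>
    (sq_le_sq₀ (norm_nonneg _) (norm_nonneg _)).1 <| by
      nlinarith [hgap t, mul_nonneg ha.le (sq_nonneg (t - s))]
  rw [setDist_eq_norm_starProjection_sub K (mem_range_self s) (forall_mem_range.2 hmin),
    exists_mem_dist_eq_iff K (hmin t), ← sq_eq_sq₀ (norm_nonneg _) (norm_nonneg _),
    ← sub_eq_zero, hgap, mul_eq_zero, or_iff_right ha.ne', pow_eq_zero_iff two_ne_zero, sub_eq_zero]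

end DistToSubspace

theorem stmt_4_general {r n : ℕ}
    (P : Matrix (Fin (r + 1)) (Fin n) ℝ)
    (hP : LinearIndependent ℝ (fun j : Fin n => (WithLp.toLp 2 (Pᵀ j) : EuclideanSpace ℝ (Fin (r + 1)))))
    (Psub : Submodule ℝ (EuclideanSpace ℝ (Fin (r + 1))))
    (hPsub : Psub = Submodule.span ℝ
      (Set.range fun j : Fin n => (WithLp.toLp 2 (Pᵀ j) : EuclideanSpace ℝ (Fin (r + 1)))))
    (W : Matrix (Fin (r + 1)) (Fin (r + 1)) ℝ)
    (hW : W = P * (Pᵀ * P)⁻¹ * Pᵀ - 1)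
    (w₁ : EuclideanSpace ℝ (Fin (r + 1))) (hw₁ : w₁ = WithLp.toLp 2 (fun i => W i 0))
    (l' : Fin r → ℝ)
    (L : Set (EuclideanSpace ℝ (Fin (r + 1))))
    (hL : L = {x : EuclideanSpace ℝ (Fin (r + 1)) | ∃ t : ℝ, x = WithLp.toLp 2 (Fin.cons t l' : Fin (r + 1) → ℝ)})
    (hw : w₁ ≠ 0)
    (t₁ t₂ t₃ : ℝ) (ht12 : t₁ ≠ t₂) (ht13 : t₁ ≠ t₃) (ht23 : t₂ ≠ t₃)
    (l₁ l₂ l₃ : EuclideanSpace ℝ (Fin (r + 1)))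
    (hl₁ : l₁ = WithLp.toLp 2 (Fin.cons t₁ l' : Fin (r + 1) → ℝ)) (hl₂ : l₂ = WithLp.toLp 2 (Fin.cons t₂ l' : Fin (r + 1) → ℝ)) (hl₃ : l₃ = WithLp.toLp 2 (Fin.cons t₃ l' : Fin (r + 1) → ℝ))
    (d₁ d₂ d₃ : ℝ)
    (hd₁ : d₁ = ‖(Submodule.orthogonalProjectionOnto Psub l₁ : EuclideanSpace ℝ (Fin (r + 1))) - l₁‖ ^ 2)
    (hd₂ : d₂ = ‖(Submodule.orthogonalProjectionOnto Psub l₂ : EuclideanSpace ℝ (Fin (r + 1))) - l₂‖ ^ 2)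
    (hd₃ : d₃ = ‖(Submodule.orthogonalProjectionOnto Psub l₃ : EuclideanSpace ℝ (Fin (r + 1))) - l₃‖ ^ 2)
    (a₀ a₁ a₂ : ℝ)
    (ha₁ : a₀ + a₁ * t₁ + a₂ * t₁ ^ 2 = d₁)
    (ha₂ : a₀ + a₁ * t₂ + a₂ * t₂ ^ 2 = d₂)
    (ha₃ : a₀ + a₁ * t₃ + a₂ * t₃ ^ 2 = d₃) :
    a₂ = ‖w₁‖ ^ 2 ∧ 0 < a₂ ∧
    ∀ (tpred : ℝ) (lpred : EuclideanSpace ℝ (Fin (r + 1))), lpred = WithLp.toLp 2 (Fin.cons tpred l' : Fin (r + 1) → ℝ) →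
      ((∃ p₀ ∈ Psub, dist lpred p₀ = setDist L ↑Psub) ↔ tpred = -a₁ / (2 * a₂)) := by
  set γ : ℝ → EuclideanSpace ℝ (Fin (r + 1)) := fun t => WithLp.toLp 2 (Fin.cons t l')
  set T := Psub.starProjection - ContinuousLinearMap.id ℝ _
  have hγ : ∀ t, γ t = γ 0 + t • EuclideanSpace.single 0 1 := fun t => by
    ext i; cases i using Fin.cases <;> simp [γ]
  have hTe : T (EuclideanSpace.single 0 1) = w₁ := by
    subst hPsub hW hw₁
    ext i
    simp [T, starProjection_span_cols_eq (isUnit_transpose_mul_self_of_linearIndependent hP),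
      Matrix.one_apply]
  have hquad : ∀ t, ‖Psub.starProjection (γ t) - γ t‖ ^ 2 =
      ‖T (γ 0)‖ ^ 2 + 2 * inner ℝ w₁ (T (γ 0)) * t + ‖w₁‖ ^ 2 * t ^ 2 := fun t => by
    change ‖T (γ t)‖ ^ 2 = _
    simpa only [ContinuousLinearMap.coe_coe, ← hγ, hTe] using
      norm_sq_map_add_smul T.toLinearMap (γ 0) (EuclideanSpace.single 0 1) t
  subst hl₁ hl₂ hl₃ hd₁ hd₂ hd₃
  obtain ⟨-, hb, ha⟩ := quadratic_coeffs_eq_of_eq_at_three ht12 ht13 ht23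
    (ha₁.trans (hquad t₁)) (ha₂.trans (hquad t₂)) (ha₃.trans (hquad t₃))
  have hw_pos : 0 < ‖w₁‖ ^ 2 := pow_pos (norm_pos_iff.2 hw) 2
  refine ⟨ha, ha ▸ hw_pos, fun tpred lpred hlpred => ?_⟩
  have hLγ : L = range γ := by
    subst hL; ext; exact exists_congr fun _ => eq_comm
  subst hlpred hLγ
  rw [hb, ha]
  exact exists_mem_dist_eq_setDist_range_iff Psub hw_pos hquad tpred

/-- Proposition 3: assume `w₁ ≠ 0`.  Let `t₁,t₂,t₃` be distinct reals, `lᵢ = (tᵢ,l')ᵀ ∈ ℒ`,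
`dᵢ = ‖proj_𝒫(lᵢ) - lᵢ‖²`, and let `(a₀,a₁,a₂)` solve the Vandermonde system
`a₀ + a₁ tᵢ + a₂ tᵢ² = dᵢ` (`i = 1,2,3`).  Then `a₂ = ‖w₁‖² > 0` and `l_pred = (t_pred,l')ᵀ`
attains `d(ℒ,𝒫)` (there is `p₀ ∈ 𝒫` with `d(l_pred,p₀) = d(ℒ,𝒫)`) iff
`t_pred = -a₁/(2a₂)`. -/
theorem stmt_4 {r n : ℕ} (hr : 1 ≤ r)
    (P : Matrix (Fin (r + 1)) (Fin n) ℝ)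
    (hP : LinearIndependent ℝ (fun j : Fin n => (WithLp.toLp 2 (Pᵀ j) : EuclideanSpace ℝ (Fin (r + 1)))))
    (Psub : Submodule ℝ (EuclideanSpace ℝ (Fin (r + 1))))
    (hPsub : Psub = Submodule.span ℝ
      (Set.range fun j : Fin n => (WithLp.toLp 2 (Pᵀ j) : EuclideanSpace ℝ (Fin (r + 1)))))
    (W : Matrix (Fin (r + 1)) (Fin (r + 1)) ℝ)
    (hW : W = P * (Pᵀ * P)⁻¹ * Pᵀ - 1)
    (w₁ : EuclideanSpace ℝ (Fin (r + 1))) (hw₁ : w₁ = WithLp.toLp 2 (fun i => W i 0))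
    (W' : Matrix (Fin (r + 1)) (Fin r) ℝ) (hW' : W' = fun i j => W i j.succ)
    (l' : Fin r → ℝ)
    (L : Set (EuclideanSpace ℝ (Fin (r + 1))))
    (hL : L = {x : EuclideanSpace ℝ (Fin (r + 1)) | ∃ t : ℝ, x = WithLp.toLp 2 (Fin.cons t l' : Fin (r + 1) → ℝ)})
    (hw : w₁ ≠ 0)
    (t₁ t₂ t₃ : ℝ) (ht12 : t₁ ≠ t₂) (ht13 : t₁ ≠ t₃) (ht23 : t₂ ≠ t₃)
    (l₁ l₂ l₃ : EuclideanSpace ℝ (Fin (r + 1)))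
    (hl₁ : l₁ = WithLp.toLp 2 (Fin.cons t₁ l' : Fin (r + 1) → ℝ)) (hl₂ : l₂ = WithLp.toLp 2 (Fin.cons t₂ l' : Fin (r + 1) → ℝ)) (hl₃ : l₃ = WithLp.toLp 2 (Fin.cons t₃ l' : Fin (r + 1) → ℝ))
    (d₁ d₂ d₃ : ℝ)
    (hd₁ : d₁ = ‖(Submodule.orthogonalProjectionOnto Psub l₁ : EuclideanSpace ℝ (Fin (r + 1))) - l₁‖ ^ 2)
    (hd₂ : d₂ = ‖(Submodule.orthogonalProjectionOnto Psub l₂ : EuclideanSpace ℝ (Fin (r + 1))) - l₂‖ ^ 2)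
    (hd₃ : d₃ = ‖(Submodule.orthogonalProjectionOnto Psub l₃ : EuclideanSpace ℝ (Fin (r + 1))) - l₃‖ ^ 2)
    (a₀ a₁ a₂ : ℝ)
    (ha₁ : a₀ + a₁ * t₁ + a₂ * t₁ ^ 2 = d₁)
    (ha₂ : a₀ + a₁ * t₂ + a₂ * t₂ ^ 2 = d₂)
    (ha₃ : a₀ + a₁ * t₃ + a₂ * t₃ ^ 2 = d₃) :
    a₂ = ‖w₁‖ ^ 2 ∧ 0 < a₂ ∧
    ∀ (tpred : ℝ) (lpred : EuclideanSpace ℝ (Fin (r + 1))), lpred = WithLp.toLp 2 (Fin.cons tpred l' : Fin (r + 1) → ℝ) →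
      ((∃ p₀ ∈ Psub, dist lpred p₀ = setDist L ↑Psub) ↔ tpred = -a₁ / (2 * a₂)) :=
  stmt_4_general P hP Psub hPsub W hW w₁ hw₁ l' L hL hw t₁ t₂ t₃ ht12 ht13 ht23 l₁ l₂ l₃ hl₁ hl₂ hl₃
    d₁ d₂ d₃ hd₁ hd₂ hd₃ a₀ a₁ a₂ ha₁ ha₂ ha₃
end
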